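/- arXiv:1410.2961 — 8 statements merged into one kernel-verified Lean document; each statement's English description precedes it below -/
import Mathlib

section
/- Let 0 < δ₁ < δ₀ < 1 be real numbers. Then there exists a real number μ > 0 such that [log((1−δ₁)/((δ₀+1−δ₁)(1−δ₀)))] · [log(δ₀/((δ₀+1−δ₁)·δ₁))] > μ² > (log(δ₀+1−δ₁))². -/
/-! Write `x = δ₀ - δ₁`, `u = log ((1 - δ₁) / (1 - δ₀))`, `v = log (δ₀ / δ₁)` and
`L = log (1 + x)`; the two factors are `u - L` and `v - L`, so the claim amounts to
`L * (u + v) < u * v`. Since the logarithmic mean lies below the arithmetic mean,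
`x / u < (2 - δ₀ - δ₁) / 2` and `x / v < (δ₀ + δ₁) / 2`, whence `x / u + x / v < 1`;
together with `L < x` this gives `L / u + L / v < 1`. -/

open Real

lemma two_mul_sub_lt_add_mul_log_div {a b : ℝ} (hb : 0 < b) (hba : b < a) :
    2 * (a - b) < (a + b) * log (a / b) := by
  have h := lt_log_one_add_of_pos (div_pos (sub_pos.2 hba) hb)
  rw [show 1 + (a - b) / b = a / b by field_simp; ring,
    show 2 * ((a - b) / b) / ((a - b) / b + 2) = 2 * (a - b) / (a + b) by field_simp; ring,
    div_lt_iff₀ (by linarith)] at h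
  linarith

lemma log_div_mul_eq_log_div_sub_log {a b c : ℝ} (ha : a ≠ 0) (hb : b ≠ 0) (hc : c ≠ 0) :
    log (a / (c * b)) = log (a / b) - log c := by
  rw [div_mul_eq_div_div_swap, log_div (div_ne_zero ha hb) hc]

lemma exists_pos_sq_lt_and_lt_sq {a b : ℝ} (ha : 0 ≤ a) (hab : a < b) :
    ∃ μ : ℝ, 0 < μ ∧ μ ^ 2 < b ∧ a < μ ^ 2 := by
  obtain ⟨c, hac, hcb⟩ := exists_between hab
  refine ⟨√c, sqrt_pos.2 (ha.trans_lt hac), ?_⟩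
  rw [sq_sqrt (ha.trans hac.le)]
  exact ⟨hcb, hac⟩

/-- Lemma 1 (key inequality): for `0 < δ₁ < δ₀ < 1` there exists `μ > 0` with
`log((1−δ₁)/((δ₀+1−δ₁)(1−δ₀))) · log(δ₀/((δ₀+1−δ₁)·δ₁)) > μ² > (log(δ₀+1−δ₁))²`. -/
theorem key_inequality (δ₀ δ₁ : ℝ) (h1 : 0 < δ₁) (h2 : δ₁ < δ₀) (h3 : δ₀ < 1) :
    ∃ μ : ℝ, 0 < μ ∧
      μ ^ 2 <
        Real.log ((1 - δ₁) / ((δ₀ + 1 - δ₁) * (1 - δ₀))) *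
          Real.log (δ₀ / ((δ₀ + 1 - δ₁) * δ₁)) ∧
      (Real.log (δ₀ + 1 - δ₁)) ^ 2 < μ ^ 2 := by
  rw [log_div_mul_eq_log_div_sub_log (by linarith) (by linarith) (by linarith),
    log_div_mul_eq_log_div_sub_log (by linarith) (by linarith) (by linarith)]
  set L := log (δ₀ + 1 - δ₁)
  set u := log ((1 - δ₁) / (1 - δ₀))
  set v := log (δ₀ / δ₁)
  have hL : L < δ₀ - δ₁ := by
    linarith [log_lt_sub_one_of_pos (x := δ₀ + 1 - δ₁) (by linarith) (by linarith)]
  have hu : 0 < u := log_pos ((one_lt_div (by linarith)).2 (by linarith))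
  have hv : 0 < v := log_pos ((one_lt_div h1).2 h2)
  have hxu : 2 * (δ₀ - δ₁) < (2 - δ₀ - δ₁) * u := by
    have := two_mul_sub_lt_add_mul_log_div (a := 1 - δ₁) (b := 1 - δ₀) (by linarith) (by linarith)
    convert this using 2 <;> ring
  have hxv : 2 * (δ₀ - δ₁) < (δ₀ + δ₁) * v := by
    convert two_mul_sub_lt_add_mul_log_div h1 h2 using 2
  have hLuv : L * (u + v) < u * v := by
    nlinarith [mul_lt_mul_of_pos_right hxu hv, mul_lt_mul_of_pos_right hxv hu,
      mul_lt_mul_of_pos_right hL (add_pos hu hv)]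
  exact exists_pos_sq_lt_and_lt_sq (sq_nonneg L) (by linarith)
end

section
/- Let 0 < δ₁ < δ₀ < 1 and let μ > 0 satisfy both [log((1−δ₁)/((δ₀+1−δ₁)(1−δ₀)))] · [log(δ₀/((δ₀+1−δ₁)·δ₁))] > μ² and μ² > (log(δ₀+1−δ₁))². Define δ₀' = e^{−μ}·δ₀ and δ₁' = e^{−μ}·δ₁ + (1 − e^{−μ}). Then 0 < δ₀' < δ₁' < 1 and R_{(δ₀',δ₁')}(θ) < R_{(δ₀,δ₁)}(θ) for every θ ∈ [0,1]; in particular (δ₀',δ₁') dominates (δ₀,δ₁). -/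
/-!
For `δ, δ' ∈ (0,1)²` both risks are finite, and when `δ₀'/δ₀ = (1 - δ₁')/(1 - δ₁) = e^{-μ}` the
two cross terms of the difference collapse to `-μ`:
`R_δ(θ) - R_δ'(θ) = a (1-θ)² + b θ² - 2μ θ(1-θ)` with `a = log((1-δ₀')/(1-δ₀))`, `b = log(δ₁'/δ₁)`.
This quadratic form is positive definite once `a > 0` and `a b > μ²`. The bound `μ > log(δ₀+1-δ₁)`
means `e^{-μ}(δ₀+1-δ₁) < 1`; this gives `δ₀' < δ₁'`, and it makes `a` and `b` exceed the two
(positive) logarithms of the first hypothesis, whence `a b > μ²`.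
-/

open scoped ENNReal

/-- The Kullback–Leibler loss `L(θ,d) = θ·log(θ/d) + (1−θ)·log((1−θ)/(1−d)) ∈ [0,∞]`,
with the conventions `0 · log(0/c) = 0` and `c · log(c/0) = +∞` for `c > 0`.
(When `θ = 0` or `θ = 1`, the corresponding vanishing term is `0` automatically
since `Real.log 0 = 0` in Lean.) -/
noncomputable def KLoss (θ d : ℝ) : ℝ≥0∞ :=
  if (θ ≠ 0 ∧ d = 0) ∨ (θ ≠ 1 ∧ d = 1) then ⊤
  else ENNReal.ofReal
    (θ * Real.log (θ / d) + (1 - θ) * Real.log ((1 - θ) / (1 - d)))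

/-- The risk function `R_δ(θ) = (1−θ)·L(θ,δ₀) + θ·L(θ,δ₁) ∈ [0,∞]`
of a decision `δ = (δ₀, δ₁)`. -/
noncomputable def risk (δ : ℝ × ℝ) (θ : ℝ) : ℝ≥0∞ :=
  ENNReal.ofReal (1 - θ) * KLoss θ δ.1 + ENNReal.ofReal θ * KLoss θ δ.2

/-- `δ'` dominates `δ`: `R_{δ'} ≤ R_δ` on `[0,1]`, with strict inequality somewhere. -/
def Dominates (δ' δ : ℝ × ℝ) : Prop :=
  (∀ θ ∈ Set.Icc (0 : ℝ) 1, risk δ' θ ≤ risk δ θ) ∧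
  (∃ θ ∈ Set.Icc (0 : ℝ) 1, risk δ' θ < risk δ θ)

open Real Set

noncomputable def klReal (θ d : ℝ) : ℝ :=
  θ * log (θ / d) + (1 - θ) * log ((1 - θ) / (1 - d))

noncomputable def riskReal (δ : ℝ × ℝ) (θ : ℝ) : ℝ :=
  (1 - θ) * klReal θ δ.1 + θ * klReal θ δ.2

noncomputable def expShift (μ : ℝ) (δ : ℝ × ℝ) : ℝ × ℝ :=
  (exp (-μ) * δ.1, exp (-μ) * δ.2 + (1 - exp (-μ)))

lemma sub_le_mul_log_div {t s : ℝ} (ht : 0 ≤ t) (hs : 0 < s) : t - s ≤ t * log (t / s) := by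
  rcases ht.eq_or_lt with rfl | ht
  · simpa using hs.le
  · have h := one_sub_inv_le_log_of_pos (div_pos ht hs)
    rw [inv_div] at h
    calc t - s = t * (1 - s / t) := by field_simp
      _ ≤ t * log (t / s) := mul_le_mul_of_nonneg_left h ht.le

lemma mul_log_div_eq_add (t : ℝ) {s s' : ℝ} (hs : 0 < s) (hs' : 0 < s') :
    t * log (t / s) = t * log (t / s') + t * log (s' / s) := by
  rcases eq_or_ne t 0 with rfl | ht
  · simp
  · rw [← mul_add, ← log_mul (div_ne_zero ht hs'.ne') (div_ne_zero hs'.ne' hs.ne'),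
      div_mul_div_cancel₀ hs'.ne']

lemma klReal_nonneg {θ d : ℝ} (hθ : θ ∈ Icc 0 1) (hd : d ∈ Ioo 0 1) : 0 ≤ klReal θ d := by
  have h₀ := sub_le_mul_log_div hθ.1 hd.1
  have h₁ := sub_le_mul_log_div (sub_nonneg.2 hθ.2) (sub_pos.2 hd.2)
  unfold klReal
  linarith

lemma klReal_sub_klReal (θ : ℝ) {d d' : ℝ} (hd : d ∈ Ioo 0 1) (hd' : d' ∈ Ioo 0 1) :
    klReal θ d - klReal θ d' = θ * log (d' / d) + (1 - θ) * log ((1 - d') / (1 - d)) := by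
  rw [klReal, klReal, mul_log_div_eq_add θ hd.1 hd'.1,
    mul_log_div_eq_add (1 - θ) (sub_pos.2 hd.2) (sub_pos.2 hd'.2)]
  ring

lemma KLoss_eq_ofReal (θ : ℝ) {d : ℝ} (hd : d ∈ Ioo 0 1) :
    KLoss θ d = ENNReal.ofReal (klReal θ d) := by
  rw [KLoss, if_neg, klReal]
  rintro (⟨-, h⟩ | ⟨-, h⟩)
  · exact hd.1.ne' h
  · exact hd.2.ne h

lemma riskReal_nonneg {δ : ℝ × ℝ} {θ : ℝ} (hθ : θ ∈ Icc 0 1) (hδ₀ : δ.1 ∈ Ioo 0 1)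
    (hδ₁ : δ.2 ∈ Ioo 0 1) : 0 ≤ riskReal δ θ :=
  add_nonneg (mul_nonneg (sub_nonneg.2 hθ.2) (klReal_nonneg hθ hδ₀))
    (mul_nonneg hθ.1 (klReal_nonneg hθ hδ₁))

lemma risk_eq_ofReal {δ : ℝ × ℝ} {θ : ℝ} (hθ : θ ∈ Icc 0 1) (hδ₀ : δ.1 ∈ Ioo 0 1)
    (hδ₁ : δ.2 ∈ Ioo 0 1) : risk δ θ = ENNReal.ofReal (riskReal δ θ) := by
  rw [risk, riskReal, KLoss_eq_ofReal θ hδ₀, KLoss_eq_ofReal θ hδ₁,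
    ← ENNReal.ofReal_mul (sub_nonneg.2 hθ.2), ← ENNReal.ofReal_mul hθ.1, ENNReal.ofReal_add
      (mul_nonneg (sub_nonneg.2 hθ.2) (klReal_nonneg hθ hδ₀))
      (mul_nonneg hθ.1 (klReal_nonneg hθ hδ₁))]

lemma riskReal_sub_riskReal (θ : ℝ) {δ δ' : ℝ × ℝ} (hδ₀ : δ.1 ∈ Ioo 0 1)
    (hδ₁ : δ.2 ∈ Ioo 0 1) (hδ₀' : δ'.1 ∈ Ioo 0 1) (hδ₁' : δ'.2 ∈ Ioo 0 1) :
    riskReal δ θ - riskReal δ' θ =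
      (1 - θ) * (θ * log (δ'.1 / δ.1) + (1 - θ) * log ((1 - δ'.1) / (1 - δ.1))) +
        θ * (θ * log (δ'.2 / δ.2) + (1 - θ) * log ((1 - δ'.2) / (1 - δ.2))) := by
  rw [← klReal_sub_klReal θ hδ₀ hδ₀', ← klReal_sub_klReal θ hδ₁ hδ₁', riskReal, riskReal]
  ring

lemma dominates_of_forall_risk_lt {δ' δ : ℝ × ℝ}
    (h : ∀ θ ∈ Icc (0 : ℝ) 1, risk δ' θ < risk δ θ) : Dominates δ' δ :=
  ⟨fun θ hθ => (h θ hθ).le, 0, left_mem_Icc.2 zero_le_one, h 0 (left_mem_Icc.2 zero_le_one)⟩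

lemma quadratic_form_pos {a b μ x y : ℝ} (ha : 0 < a) (hab : μ ^ 2 < a * b)
    (hxy : x ≠ 0 ∨ y ≠ 0) : 0 < a * x ^ 2 + b * y ^ 2 - 2 * μ * x * y := by
  -- a · (a x² + b y² − 2μxy) = (a x − μ y)² + (a b − μ²) y²
  rcases eq_or_ne y 0 with rfl | hy
  · have hx : x ≠ 0 := hxy.resolve_right (not_not.2 rfl)
    simpa using mul_pos ha (pow_two_pos_of_ne_zero hx)
  · refine pos_of_mul_pos_right (a := a) ?_ ha.le
    nlinarith [sq_nonneg (a * x - μ * y), mul_pos (sub_pos.2 hab) (pow_two_pos_of_ne_zero hy)]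

lemma expShift_fst_mem {μ : ℝ} (hμ : 0 ≤ μ) {δ : ℝ × ℝ} (hδ₀ : δ.1 ∈ Ioo 0 1) :
    (expShift μ δ).1 ∈ Ioo 0 1 := by
  have hE : exp (-μ) ≤ 1 := exp_le_one_iff.2 (neg_nonpos.2 hμ)
  constructor <;> simp only [expShift] <;> nlinarith [hδ₀.1, hδ₀.2, exp_pos (-μ)]

lemma expShift_snd_mem {μ : ℝ} (hμ : 0 ≤ μ) {δ : ℝ × ℝ} (hδ₁ : δ.2 ∈ Ioo 0 1) :
    (expShift μ δ).2 ∈ Ioo 0 1 := by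
  have hE : exp (-μ) ≤ 1 := exp_le_one_iff.2 (neg_nonpos.2 hμ)
  constructor <;> simp only [expShift] <;> nlinarith [hδ₁.1, hδ₁.2, exp_pos (-μ)]

lemma log_expShift_fst_div (μ : ℝ) {δ : ℝ × ℝ} (hδ₀ : δ.1 ≠ 0) :
    log ((expShift μ δ).1 / δ.1) = -μ := by
  rw [expShift, mul_div_cancel_right₀ _ hδ₀, log_exp]

lemma log_one_sub_expShift_snd_div (μ : ℝ) {δ : ℝ × ℝ} (hδ₁ : δ.2 ≠ 1) :
    log ((1 - (expShift μ δ).2) / (1 - δ.2)) = -μ := by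
  rw [expShift, show 1 - (exp (-μ) * δ.2 + (1 - exp (-μ))) = exp (-μ) * (1 - δ.2) by ring,
    mul_div_cancel_right₀ _ (sub_ne_zero.2 hδ₁.symm), log_exp]

lemma risk_expShift_lt {μ θ : ℝ} {δ : ℝ × ℝ} (hμ : 0 ≤ μ) (hδ₀ : δ.1 ∈ Ioo 0 1)
    (hδ₁ : δ.2 ∈ Ioo 0 1) (ha : 0 < log ((1 - (expShift μ δ).1) / (1 - δ.1)))
    (hab : μ ^ 2 < log ((1 - (expShift μ δ).1) / (1 - δ.1)) * log ((expShift μ δ).2 / δ.2))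
    (hθ : θ ∈ Icc 0 1) : risk (expShift μ δ) θ < risk δ θ := by
  have hδ₀' := expShift_fst_mem hμ hδ₀
  have hδ₁' := expShift_snd_mem hμ hδ₁
  rw [risk_eq_ofReal hθ hδ₀' hδ₁', risk_eq_ofReal hθ hδ₀ hδ₁,
    ENNReal.ofReal_lt_ofReal_iff_of_nonneg (riskReal_nonneg hθ hδ₀' hδ₁'), ← sub_pos,
    riskReal_sub_riskReal θ hδ₀ hδ₁ hδ₀' hδ₁', log_expShift_fst_div μ hδ₀.1.ne',
    log_one_sub_expShift_snd_div μ hδ₁.2.ne]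
  have hxy : 1 - θ ≠ 0 ∨ θ ≠ 0 := by
    by_contra! h
    linarith [h.1, h.2]
  linarith [quadratic_form_pos (x := 1 - θ) (y := θ) ha hab hxy]

lemma exp_neg_mul_lt_one {μ c : ℝ} (hc : 0 < c) (h : log c < μ) : exp (-μ) * c < 1 := by
  rw [exp_neg]
  exact (inv_mul_lt_one₀ (exp_pos μ)).2 ((log_lt_iff_lt_exp hc).1 h)

lemma div_lt_one_sub_mul {E δ₀ δ₁ : ℝ} (hδ₀ : 0 < δ₀) (hc : 0 < δ₀ + 1 - δ₁)
    (hE : E * (δ₀ + 1 - δ₁) < 1) : (1 - δ₁) / (δ₀ + 1 - δ₁) < 1 - E * δ₀ := by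
  rw [div_lt_iff₀ hc]
  nlinarith

lemma div_lt_mul_add_one_sub {E δ₀ δ₁ : ℝ} (hδ₁ : δ₁ < 1) (hc : 0 < δ₀ + 1 - δ₁)
    (hE : E * (δ₀ + 1 - δ₁) < 1) : δ₀ / (δ₀ + 1 - δ₁) < E * δ₁ + (1 - E) := by
  rw [div_lt_iff₀ hc]
  nlinarith

/-- If `0 < δ₁ < δ₀ < 1` and `μ > 0` satisfies the key inequality, then the decision
`δ' = (e^{−μ}δ₀, e^{−μ}δ₁ + (1 − e^{−μ}))` lies in `0 < δ₀' < δ₁' < 1`, has strictly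
smaller risk at every `θ ∈ [0,1]`, and in particular dominates `(δ₀, δ₁)`. -/
theorem exp_shift_dominates (δ₀ δ₁ μ : ℝ)
    (h1 : 0 < δ₁) (h2 : δ₁ < δ₀) (h3 : δ₀ < 1) (hμ : 0 < μ)
    (hineq1 : μ ^ 2 <
      Real.log ((1 - δ₁) / ((δ₀ + 1 - δ₁) * (1 - δ₀))) *
        Real.log (δ₀ / ((δ₀ + 1 - δ₁) * δ₁)))
    (hineq2 : (Real.log (δ₀ + 1 - δ₁)) ^ 2 < μ ^ 2) :
    (0 < Real.exp (-μ) * δ₀ ∧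
      Real.exp (-μ) * δ₀ < Real.exp (-μ) * δ₁ + (1 - Real.exp (-μ)) ∧
      Real.exp (-μ) * δ₁ + (1 - Real.exp (-μ)) < 1) ∧
    (∀ θ ∈ Set.Icc (0 : ℝ) 1,
      risk (Real.exp (-μ) * δ₀, Real.exp (-μ) * δ₁ + (1 - Real.exp (-μ))) θ <
        risk (δ₀, δ₁) θ) ∧
    Dominates (Real.exp (-μ) * δ₀, Real.exp (-μ) * δ₁ + (1 - Real.exp (-μ))) (δ₀, δ₁) := by
  have hδ₀ : δ₀ ∈ Ioo 0 1 := ⟨h1.trans h2, h3⟩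
  have hδ₁ : δ₁ ∈ Ioo 0 1 := ⟨h1, h2.trans h3⟩
  have hc : 0 < δ₀ + 1 - δ₁ := by linarith
  have hE : exp (-μ) * (δ₀ + 1 - δ₁) < 1 :=
    exp_neg_mul_lt_one hc (abs_lt_of_sq_lt_sq' hineq2 hμ.le).2
  have hA : 0 < log ((1 - δ₁) / ((δ₀ + 1 - δ₁) * (1 - δ₀))) :=
    log_pos ((one_lt_div (mul_pos hc (sub_pos.2 h3))).2 (by nlinarith))
  have hB : 0 < log (δ₀ / ((δ₀ + 1 - δ₁) * δ₁)) :=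
    log_pos ((one_lt_div (mul_pos hc h1)).2 (by nlinarith))
  have ha : log ((1 - δ₁) / ((δ₀ + 1 - δ₁) * (1 - δ₀))) <
      log ((1 - exp (-μ) * δ₀) / (1 - δ₀)) := by
    refine log_lt_log (div_pos (sub_pos.2 hδ₁.2) (mul_pos hc (sub_pos.2 h3))) ?_
    rw [← div_div]
    exact div_lt_div_of_pos_right (div_lt_one_sub_mul hδ₀.1 hc hE) (sub_pos.2 h3)
  have hb : log (δ₀ / ((δ₀ + 1 - δ₁) * δ₁)) < log ((exp (-μ) * δ₁ + (1 - exp (-μ))) / δ₁) := by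
    refine log_lt_log (div_pos hδ₀.1 (mul_pos hc h1)) ?_
    rw [← div_div]
    exact div_lt_div_of_pos_right (div_lt_mul_add_one_sub hδ₁.2 hc hE) h1
  have hlt : ∀ θ ∈ Icc (0 : ℝ) 1, risk (expShift μ (δ₀, δ₁)) θ < risk (δ₀, δ₁) θ :=
    fun θ hθ => risk_expShift_lt hμ.le hδ₀ hδ₁ (hA.trans ha)
      (hineq1.trans (mul_lt_mul'' ha hb hA.le hB.le)) hθ
  refine ⟨⟨mul_pos (exp_pos _) hδ₀.1, by linarith, ?_⟩, hlt, dominates_of_forall_risk_lt hlt⟩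
  nlinarith [exp_pos (-μ)]
end

section
/- Let 0 < δ₁ < δ₀ < 1 and let μ > 0 satisfy [log((1−δ₁)/((δ₀+1−δ₁)(1−δ₀)))] · [log(δ₀/((δ₀+1−δ₁)·δ₁))] > μ². Then log((1 − (1−δ₁)·e^{−μ})/δ₁) · log((1 − δ₀·e^{−μ})/(1−δ₀)) > μ². -/
/-!
Put `f = logGain (1 - δ₁)`, `g = logGain δ₀` and `c = log (δ₀ + 1 - δ₁)`: the claim is
`μ² < f μ * g μ`, and since `exp (-c) = 1 / (δ₀ + 1 - δ₁)` the hypothesis reads `μ² < f c * g c`.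
Both functions vanish at `0` and are increasing and concave on `[0, ∞)`. If `c ≤ μ`,
monotonicity gives `f c * g c ≤ f μ * g μ`. If `μ < c`, concavity gives `(μ / c) f c ≤ f μ` and
likewise for `g`, so it suffices that `c² < f c * g c`. This holds unconditionally: it is the
product of `δ₀ c < (1 - δ₁) g c` and its mirror image under `(δ₀, δ₁) ↦ (1 - δ₁, 1 - δ₀)`, and
with `d = δ₀ - δ₁` both follow from `(1 + d) log (1 + d) < -log (1 - d)` and Bernoulli's inequality.
-/
open Real Set

lemma mul_log_one_add_lt_neg_log_one_sub {d : ℝ} (hd₀ : 0 < d) (hd₁ : d < 1) :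
    (1 + d) * log (1 + d) < -log (1 - d) := by
  have h_sq : log (1 - d ^ 2) < -d ^ 2 := by
    have := log_lt_sub_one_of_pos (x := 1 - d ^ 2) (by nlinarith) (by nlinarith)
    linarith
  have h_add : log (1 + d) ≤ d := by
    linarith [log_le_sub_one_of_pos (x := 1 + d) (by linarith)]
  have h_split : log (1 - d ^ 2) = log (1 - d) + log (1 + d) := by
    rw [← log_mul (by linarith) (by linarith)]
    ring_nf
  nlinarith [mul_le_mul_of_nonneg_left h_add hd₀.le]

lemma mul_log_one_sub_div_le_log_one_sub {d v : ℝ} (hv₀ : 0 < v) (hv₁ : v ≤ 1) (hdv : d < v) :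
    v * log (1 - d / v) ≤ log (1 - d) := by
  have h_pos : 0 < 1 - d / v := by rw [sub_pos, div_lt_one hv₀]; exact hdv
  have h_bernoulli : 1 - d / v ≤ (1 - d) ^ (1 / v) := by
    have := one_add_mul_self_le_rpow_one_add (s := -d) (by linarith) (p := 1 / v)
      (by rw [le_div_iff₀ hv₀]; linarith)
    convert this using 2 <;> ring
  calc v * log (1 - d / v) ≤ v * log ((1 - d) ^ (1 / v)) := by gcongr
    _ = log (1 - d) := by rw [log_rpow (by linarith)]; field_simp

lemma mul_log_one_add_lt_mul_log_div_sub {d v : ℝ} (hd : 0 < d) (hdv : d < v) (hv : v ≤ 1) :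
    (1 + d) * log (1 + d) < v * log (v / (v - d)) := by
  have hv₀ : 0 < v := hd.trans hdv
  have h_eq : v * log (v / (v - d)) = -(v * log (1 - d / v)) := by
    rw [one_sub_div hv₀.ne', ← inv_div, log_inv]
    ring
  rw [h_eq]
  linarith [mul_log_one_add_lt_neg_log_one_sub hd (hdv.trans_le hv),
    mul_log_one_sub_div_le_log_one_sub hv₀ hv hdv]

lemma mul_log_lt_mul_log_div {δ₀ δ₁ : ℝ} (h₁ : 0 ≤ δ₁) (h₁₀ : δ₁ < δ₀) (h₀ : δ₀ < 1) :
    δ₀ * log (δ₀ + 1 - δ₁) <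
      (1 - δ₁) * log ((1 - δ₁) / ((δ₀ + 1 - δ₁) * (1 - δ₀))) := by
  have h := mul_log_one_add_lt_mul_log_div_sub (d := δ₀ - δ₁) (v := 1 - δ₁)
    (by linarith) (by linarith) (by linarith)
  rw [show 1 - δ₁ - (δ₀ - δ₁) = 1 - δ₀ by ring, show 1 + (δ₀ - δ₁) = δ₀ + 1 - δ₁ by ring] at h
  rw [log_div (by linarith) (by linarith)] at h
  rw [log_div (by linarith) (by nlinarith), log_mul (by linarith) (by linarith)]
  linear_combination h

lemma log_sq_lt_mul_log {δ₀ δ₁ : ℝ} (h₁ : 0 < δ₁) (h₁₀ : δ₁ < δ₀) (h₀ : δ₀ < 1) :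
    log (δ₀ + 1 - δ₁) ^ 2 <
      log ((1 - δ₁) / ((δ₀ + 1 - δ₁) * (1 - δ₀))) * log (δ₀ / ((δ₀ + 1 - δ₁) * δ₁)) := by
  have hc : 0 < log (δ₀ + 1 - δ₁) := log_pos (by linarith)
  have hA := mul_log_lt_mul_log_div h₁.le h₁₀ h₀
  -- `(δ₀, δ₁) ↦ (1 - δ₁, 1 - δ₀)` fixes `δ₀ + 1 - δ₁` and swaps the two factors
  have hB := mul_log_lt_mul_log_div (δ₀ := 1 - δ₁) (δ₁ := 1 - δ₀)
    (by linarith) (by linarith) (by linarith)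
  simp only [sub_sub_cancel, show 1 - δ₁ + 1 - (1 - δ₀) = δ₀ + 1 - δ₁ by ring] at hB
  have h_mul := mul_lt_mul'' hA hB (mul_pos (h₁.trans h₁₀) hc).le (mul_pos (by linarith) hc).le
  nlinarith [mul_pos (h₁.trans h₁₀) (sub_pos.2 (h₁₀.trans h₀))]

lemma ConcaveOn.mul_le_map_mul {f : ℝ → ℝ} (hf : ConcaveOn ℝ (Ici 0) f) (hf₀ : f 0 = 0)
    {θ x : ℝ} (hθ₀ : 0 ≤ θ) (hθ₁ : θ ≤ 1) (hx : 0 ≤ x) : θ * f x ≤ f (θ * x) := by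
  have := hf.2 self_mem_Ici (mem_Ici.2 hx) (sub_nonneg.2 hθ₁) hθ₀ (sub_add_cancel 1 θ)
  simpa [hf₀] using this

theorem sq_lt_mul_of_concaveOn {f g : ℝ → ℝ}
    (hf : ConcaveOn ℝ (Ici 0) f) (hg : ConcaveOn ℝ (Ici 0) g)
    (hf_mono : MonotoneOn f (Ici 0)) (hg_mono : MonotoneOn g (Ici 0))
    (hf₀ : f 0 = 0) (hg₀ : g 0 = 0) {c μ : ℝ} (hc : 0 < c) (hμ : 0 < μ)
    (hc_lt : c ^ 2 < f c * g c) (hμ_lt : μ ^ 2 < f c * g c) :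
    μ ^ 2 < f μ * g μ := by
  have hfc : 0 ≤ f c := hf₀ ▸ hf_mono self_mem_Ici hc.le hc.le
  have hgc : 0 ≤ g c := hg₀ ▸ hg_mono self_mem_Ici hc.le hc.le
  rcases le_or_gt c μ with hcμ | hμc
  · have hfμ : f c ≤ f μ := hf_mono hc.le hμ.le hcμ
    have hgμ : g c ≤ g μ := hg_mono hc.le hμ.le hcμ
    calc μ ^ 2 < f c * g c := hμ_lt
      _ ≤ f μ * g μ := mul_le_mul hfμ hgμ hgc (hfc.trans hfμ)
  · set θ := μ / c
    have hθ₀ : 0 ≤ θ := by positivity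
    have hθ₁ : θ ≤ 1 := (div_le_one hc).2 hμc.le
    have hθc : θ * c = μ := div_mul_cancel₀ μ hc.ne'
    have hfμ : θ * f c ≤ f μ := hθc ▸ hf.mul_le_map_mul hf₀ hθ₀ hθ₁ hc.le
    have hgμ : θ * g c ≤ g μ := hθc ▸ hg.mul_le_map_mul hg₀ hθ₀ hθ₁ hc.le
    calc μ ^ 2 = θ ^ 2 * c ^ 2 := by rw [← hθc]; ring
      _ < θ ^ 2 * (f c * g c) := by gcongr
      _ = (θ * f c) * (θ * g c) := by ring
      _ ≤ f μ * g μ := mul_le_mul hfμ hgμ (by positivity) ((mul_nonneg hθ₀ hfc).trans hfμ)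

noncomputable def logGain (k t : ℝ) : ℝ := log ((1 - k * exp (-t)) / (1 - k))

section logGain

variable {k : ℝ}

lemma logGain_zero (hk : k ≠ 1) : logGain k 0 = 0 := by
  simp [logGain, div_self (sub_ne_zero.2 hk.symm)]

lemma logGain_log {s : ℝ} (hs : 0 < s) : logGain k (log s) = log ((s - k) / (s * (1 - k))) := by
  rw [logGain, exp_neg, exp_log hs, ← div_eq_mul_inv, one_sub_div hs.ne', div_div]

lemma one_sub_le_one_sub_mul_exp_neg (hk : 0 ≤ k) {t : ℝ} (ht : 0 ≤ t) :
    1 - k ≤ 1 - k * exp (-t) := by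
  have : exp (-t) ≤ 1 := exp_le_one_iff.2 (neg_nonpos.2 ht)
  nlinarith

lemma monotoneOn_logGain (hk₀ : 0 ≤ k) (hk₁ : k < 1) : MonotoneOn (logGain k) (Ici 0) := by
  intro x hx y _ hxy
  have hx' := one_sub_le_one_sub_mul_exp_neg hk₀ hx
  apply log_le_log (div_pos (by linarith) (by linarith))
  gcongr

lemma concaveOn_logGain (hk₀ : 0 ≤ k) (hk₁ : k < 1) : ConcaveOn ℝ (Ici 0) (logGain k) := by
  refine ⟨convex_Ici 0, fun x hx y hy a b ha hb hab => ?_⟩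
  obtain rfl : b = 1 - a := by linarith
  have h_pos : ∀ t ∈ Ici (0 : ℝ), 0 < (1 - k * exp (-t)) / (1 - k) := fun t ht =>
    div_pos (by linarith [one_sub_le_one_sub_mul_exp_neg hk₀ ht]) (by linarith)
  have h_exp : exp (-(a * x + (1 - a) * y)) ≤ a * exp (-x) + (1 - a) * exp (-y) := by
    have := convexOn_exp.2 (mem_univ (-x)) (mem_univ (-y)) ha hb hab
    simpa only [smul_eq_mul, mul_neg, neg_add] using this
  calc a • logGain k x + (1 - a) • logGain k y
      ≤ log (a • ((1 - k * exp (-x)) / (1 - k)) + (1 - a) • ((1 - k * exp (-y)) / (1 - k))) :=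
        strictConcaveOn_log_Ioi.concaveOn.2 (h_pos x hx) (h_pos y hy) ha hb hab
    _ = log ((1 - k * (a * exp (-x) + (1 - a) * exp (-y))) / (1 - k)) := by
        simp only [smul_eq_mul]; ring_nf
    _ ≤ logGain k (a • x + (1 - a) • y) := by
        have hX := one_sub_le_one_sub_mul_exp_neg hk₀ hx
        have hY := one_sub_le_one_sub_mul_exp_neg hk₀ hy
        rw [logGain, smul_eq_mul, smul_eq_mul]
        apply log_le_log (div_pos (by nlinarith) (by linarith))
        gcongr

end logGain

/-- If `0 < δ₁ < δ₀ < 1` and `μ > 0` satisfies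
`log((1−δ₁)/((δ₀+1−δ₁)(1−δ₀))) · log(δ₀/((δ₀+1−δ₁)·δ₁)) > μ²`, then
`log((1 − (1−δ₁)e^{−μ})/δ₁) · log((1 − δ₀ e^{−μ})/(1−δ₀)) > μ²`. -/
theorem log_product_bound (δ₀ δ₁ μ : ℝ) (h1 : 0 < δ₁) (h2 : δ₁ < δ₀) (h3 : δ₀ < 1)
    (hμ : 0 < μ)
    (hineq : μ ^ 2 <
      Real.log ((1 - δ₁) / ((δ₀ + 1 - δ₁) * (1 - δ₀))) *
        Real.log (δ₀ / ((δ₀ + 1 - δ₁) * δ₁))) :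
    μ ^ 2 <
      Real.log ((1 - (1 - δ₁) * Real.exp (-μ)) / δ₁) *
        Real.log ((1 - δ₀ * Real.exp (-μ)) / (1 - δ₀)) := by
  have hs : 0 < δ₀ + 1 - δ₁ := by linarith
  have hB : logGain (1 - δ₁) (log (δ₀ + 1 - δ₁)) = log (δ₀ / ((δ₀ + 1 - δ₁) * δ₁)) := by
    rw [logGain_log hs]; congr 1; ring
  have hA : logGain δ₀ (log (δ₀ + 1 - δ₁)) = log ((1 - δ₁) / ((δ₀ + 1 - δ₁) * (1 - δ₀))) := by
    rw [logGain_log hs]; congr 2; ring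
  have h := sq_lt_mul_of_concaveOn (f := logGain (1 - δ₁)) (g := logGain δ₀)
    (concaveOn_logGain (by linarith) (by linarith)) (concaveOn_logGain (by linarith) h3)
    (monotoneOn_logGain (by linarith) (by linarith)) (monotoneOn_logGain (by linarith) h3)
    (logGain_zero (by linarith)) (logGain_zero h3.ne)
    (log_pos (by linarith : 1 < δ₀ + 1 - δ₁)) hμ
    (by rw [hA, hB, mul_comm]; exact log_sq_lt_mul_log h1 h2 h3)
    (by rw [hA, hB, mul_comm]; exact hineq)
  simpa only [logGain, sub_sub_cancel] using h
end

section
/- Let δ = (δ₀,δ₁) ∈ [0,1]² be a decision lying on the boundary of the unit square (i.e. δ₀ ∈ {0,1} or δ₁ ∈ {0,1}) with δ ≠ (0,1). Then the maximum likelihood decision (0,1) dominates δ: R_{(0,1)}(θ) ≤ R_δ(θ) for all θ ∈ [0,1], with strict inequality for some θ ∈ [0,1]. -/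
open scoped ENNReal

/- At an interior `θ` every decision on the boundary of the square has infinite risk, since one
of its components predicts a certain outcome that occurs with positive probability. At `θ = 0`
and `θ = 1` the maximum likelihood decision has risk `0`, while `δ` has risk `L(0,δ₀)` resp.
`L(1,δ₁)`, which is positive unless `δ₀ = 0` resp. `δ₁ = 1`. -/

lemma KLoss_zero_right {θ : ℝ} (hθ : θ ≠ 0) : KLoss θ 0 = ⊤ := by
  simp [KLoss, hθ]

lemma KLoss_one_right {θ : ℝ} (hθ : θ ≠ 1) : KLoss θ 1 = ⊤ := by
  simp [KLoss, hθ]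

lemma KLoss_zero_zero : KLoss 0 0 = 0 := by
  simp [KLoss]

lemma KLoss_one_one : KLoss 1 1 = 0 := by
  simp [KLoss]

lemma KLoss_zero_left_pos {d : ℝ} (hd : d ∈ Set.Ioc (0 : ℝ) 1) : 0 < KLoss 0 d := by
  rcases hd.2.eq_or_lt with rfl | hd1
  · simp [KLoss_one_right]
  have hlog : 0 < Real.log (1 / (1 - d)) :=
    Real.log_pos ((one_lt_div (by linarith)).mpr (by linarith [hd.1]))
  simpa [KLoss, hd1.ne, hd.1.ne'] using hlog

lemma KLoss_one_left_pos {d : ℝ} (hd : d ∈ Set.Ico (0 : ℝ) 1) : 0 < KLoss 1 d := by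
  rcases hd.1.eq_or_lt with rfl | hd0
  · simp [KLoss_zero_right]
  have hlog : 0 < Real.log (1 / d) := Real.log_pos ((one_lt_div hd0).mpr hd.2)
  simpa [KLoss, hd.2.ne, hd0.ne'] using hlog

lemma risk_at_zero (δ : ℝ × ℝ) : risk δ 0 = KLoss 0 δ.1 := by
  simp [risk]

lemma risk_at_one (δ : ℝ × ℝ) : risk δ 1 = KLoss 1 δ.2 := by
  simp [risk]

lemma risk_eq_top_of_boundary {δ : ℝ × ℝ} (hbd : δ.1 = 0 ∨ δ.1 = 1 ∨ δ.2 = 0 ∨ δ.2 = 1)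
    {θ : ℝ} (hθ : θ ∈ Set.Ioo (0 : ℝ) 1) : risk δ θ = ⊤ := by
  obtain ⟨hθ0, hθ1⟩ := hθ
  rcases hbd with h | h | h | h <;>
    simp [risk, h, KLoss_zero_right, KLoss_one_right, hθ0.ne', hθ1.ne, hθ0, hθ1]

/-- Every decision on the boundary of the unit square other than the maximum likelihood
decision `(0,1)` is dominated by `(0,1)`. -/
theorem mle_dominates_boundary (δ : ℝ × ℝ)
    (h0 : δ.1 ∈ Set.Icc (0 : ℝ) 1) (h1 : δ.2 ∈ Set.Icc (0 : ℝ) 1)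
    (hbd : δ.1 = 0 ∨ δ.1 = 1 ∨ δ.2 = 0 ∨ δ.2 = 1)
    (hne : δ ≠ (0, 1)) :
    Dominates (0, 1) δ := by
  have mle_at_zero : risk (0, 1) 0 = 0 := risk_at_zero _ ▸ KLoss_zero_zero
  have mle_at_one : risk (0, 1) 1 = 0 := risk_at_one _ ▸ KLoss_one_one
  refine ⟨fun θ hθ => ?_, ?_⟩
  · rcases Set.eq_endpoints_or_mem_Ioo_of_mem_Icc hθ with rfl | rfl | hθ
    · simp [mle_at_zero]
    · simp [mle_at_one]
    · simp [risk_eq_top_of_boundary hbd hθ]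
  · have hne' : δ.1 ≠ 0 ∨ δ.2 ≠ 1 := by
      contrapose! hne
      exact Prod.ext hne.1 hne.2
    rcases hne' with h | h
    · refine ⟨0, Set.left_mem_Icc.mpr zero_le_one, ?_⟩
      rw [mle_at_zero, risk_at_zero]
      exact KLoss_zero_left_pos ⟨h0.1.lt_of_ne' h, h0.2⟩
    · refine ⟨1, Set.right_mem_Icc.mpr zero_le_one, ?_⟩
      rw [mle_at_one, risk_at_one]
      exact KLoss_one_left_pos ⟨h1.1, h1.2.lt_of_ne h⟩
end

section
/- For every c with 0 < c < 1, the constant decision (δ₀,δ₁) = (c,c) is admissible: no decision δ' ∈ [0,1]² dominates (c,c). -/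
open scoped ENNReal

/-! At `θ = c` the constant decision `(c, c)` has risk `0`, so a dominating decision `δ'`
must also have risk `0` there. Both weights `1 - c` and `c` are positive, hence both losses
`L(c, δ'ᵢ)` vanish, and by Gibbs' inequality this forces `δ' = (c, c)`, which cannot be
strictly better anywhere. -/

lemma mul_log_div_lt_sub {a b : ℝ} (ha : 0 < a) (hb : 0 < b) (hab : b ≠ a) :
    a * Real.log (b / a) < b - a := by
  have hlog : Real.log (b / a) < b / a - 1 :=
    Real.log_lt_sub_one_of_pos (div_pos hb ha) (by rwa [ne_eq, div_eq_one_iff_eq ha.ne'])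
  calc a * Real.log (b / a) < a * (b / a - 1) := mul_lt_mul_of_pos_left hlog ha
    _ = b - a := by field_simp

lemma binary_kl_pos {θ d : ℝ} (hθ0 : 0 < θ) (hθ1 : θ < 1) (hd0 : 0 < d) (hd1 : d < 1)
    (hne : d ≠ θ) :
    0 < θ * Real.log (θ / d) + (1 - θ) * Real.log ((1 - θ) / (1 - d)) := by
  have h₀ := mul_log_div_lt_sub hθ0 hd0 hne
  have h₁ := mul_log_div_lt_sub (a := 1 - θ) (b := 1 - d) (by linarith) (by linarith)
    (fun h => hne (by linarith))
  rw [← inv_div d θ, Real.log_inv, ← inv_div (1 - d) (1 - θ), Real.log_inv]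
  linarith

lemma KLoss_self (θ : ℝ) : KLoss θ θ = 0 := by
  simp [KLoss]

lemma risk_self (θ : ℝ) : risk (θ, θ) θ = 0 := by
  simp [risk, KLoss_self]

lemma KLoss_eq_zero_iff {θ d : ℝ} (hθ0 : 0 < θ) (hθ1 : θ < 1) (hd : d ∈ Set.Icc (0 : ℝ) 1) :
    KLoss θ d = 0 ↔ d = θ := by
  refine ⟨fun h => ?_, fun h => h ▸ KLoss_self θ⟩
  unfold KLoss at h
  split_ifs at h with hinf
  · exact absurd h ENNReal.top_ne_zero
  push Not at hinf
  have hd0 : 0 < d := lt_of_le_of_ne hd.1 (hinf.1 hθ0.ne').symm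
  have hd1 : d < 1 := lt_of_le_of_ne hd.2 (hinf.2 hθ1.ne)
  by_contra hne
  exact (ENNReal.ofReal_eq_zero.mp h).not_gt (binary_kl_pos hθ0 hθ1 hd0 hd1 hne)

lemma risk_eq_zero_iff {θ : ℝ} (hθ0 : 0 < θ) (hθ1 : θ < 1) {δ : ℝ × ℝ}
    (hδ₁ : δ.1 ∈ Set.Icc (0 : ℝ) 1) (hδ₂ : δ.2 ∈ Set.Icc (0 : ℝ) 1) :
    risk δ θ = 0 ↔ δ = (θ, θ) := by
  have hw₀ : ENNReal.ofReal (1 - θ) ≠ 0 := by simpa using hθ1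
  have hw₁ : ENNReal.ofReal θ ≠ 0 := by simpa using hθ0
  rw [risk, add_eq_zero, mul_eq_zero, mul_eq_zero, KLoss_eq_zero_iff hθ0 hθ1 hδ₁,
    KLoss_eq_zero_iff hθ0 hθ1 hδ₂, Prod.ext_iff]
  simp only [hw₀, hw₁, false_or]

/-- Every constant decision `(c, c)` with `0 < c < 1` is admissible: no decision in
`[0,1]²` dominates it. -/
theorem constant_admissible (c : ℝ) (hc0 : 0 < c) (hc1 : c < 1) :
    ∀ δ' : ℝ × ℝ, δ'.1 ∈ Set.Icc (0 : ℝ) 1 → δ'.2 ∈ Set.Icc (0 : ℝ) 1 →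
      ¬ Dominates δ' (c, c) := by
  intro δ' hδ₁ hδ₂ ⟨hle, θ, _, hlt⟩
  have hzero : risk δ' c = 0 := nonpos_iff_eq_zero.mp (risk_self c ▸ hle c ⟨hc0.le, hc1.le⟩)
  rw [(risk_eq_zero_iff hc0 hc1 hδ₁ hδ₂).mp hzero] at hlt
  exact lt_irrefl _ hlt
end

section
/- Let (δ₀,δ₁) ∈ (0,1)² with δ₀ + δ₁ ≠ 1, and define the symmetrized decision δ_s = ((δ₀ + 1 − δ₁)/2, (δ₁ + 1 − δ₀)/2). Then sup_{θ ∈ [0,1]} R_{δ_s}(θ) < sup_{θ ∈ [0,1]} R_{(δ₀,δ₁)}(θ). -/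
/-!
The reflection `θ ↦ 1 - θ` carries the risk of `δ = (δ₀, δ₁)` to the risk of its reflection
`(1 - δ₁, 1 - δ₀)`, and for every `θ ∈ [0,1]` the loss `L(θ, ·)` is strictly convex on `(0,1)`,
being `-θ log d - (1-θ) log (1-d)` up to a term independent of `d`. When `δ₀ + δ₁ ≠ 1` the two
decisions differ in both coordinates, so `R_{δ_s}(θ) < (R_δ(θ) + R_δ(1-θ))/2`, which is at most the
worst-case risk of `δ`. The risk of `δ_s` is continuous, so its supremum over `[0,1]` is attained
and therefore strictly smaller.
-/

/-- The Kullback–Leibler loss `L(θ,d) = θ·log(θ/d) + (1−θ)·log((1−θ)/(1−d))` for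
`d ∈ (0,1)`, with the convention `0 · log 0 = 0` (which holds automatically in Lean
since `Real.log 0 = 0`). -/
noncomputable def KLossR (θ d : ℝ) : ℝ :=
  θ * Real.log (θ / d) + (1 - θ) * Real.log ((1 - θ) / (1 - d))

/-- The risk function `R_δ(θ) = (1−θ)·L(θ,δ₀) + θ·L(θ,δ₁)` of a decision
`δ = (δ₀, δ₁) ∈ (0,1)²`. -/
noncomputable def riskR (δ : ℝ × ℝ) (θ : ℝ) : ℝ :=
  (1 - θ) * KLossR θ δ.1 + θ * KLossR θ δ.2

open Real Set

theorem IsCompact.sSup_image_lt_of_forall_exists_lt {X α : Type*} [TopologicalSpace X]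
    [ConditionallyCompleteLinearOrder α] [TopologicalSpace α] [ClosedIciTopology α]
    {s : Set X} {f g : X → α} (hs : IsCompact s) (hne : s.Nonempty) (hg : ContinuousOn g s)
    (hf : BddAbove (f '' s)) (h : ∀ x ∈ s, ∃ y ∈ s, g x < f y) :
    sSup (g '' s) < sSup (f '' s) := by
  obtain ⟨x, hx, hgx⟩ := hs.exists_sSup_image_eq hne hg
  obtain ⟨y, hy, hlt⟩ := h x hx
  rw [hgx]
  exact hlt.trans_le (le_csSup hf (mem_image_of_mem f hy))

theorem log_add_log_lt_two_mul_log_midpoint {a b : ℝ} (ha : 0 < a) (hb : 0 < b) (hab : a ≠ b) :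
    log a + log b < 2 * log ((a + b) / 2) := by
  have h := strictConcaveOn_log_Ioi.2 ha hb hab one_half_pos one_half_pos (add_halves 1)
  simp only [smul_eq_mul] at h
  rw [show (a + b) / 2 = 1 / 2 * a + 1 / 2 * b by ring]
  linarith

-- Also true for `d = 0`, where both sides vanish because `x / 0 = 0`.
theorem mul_log_div_eq_mul_mul_log (x d : ℝ) : x * log (x / d) = d * (x / d * log (x / d)) := by
  rcases eq_or_ne d 0 with rfl | hd
  · simp
  · rw [← mul_assoc, mul_div_cancel₀ x hd]

theorem continuous_mul_log_div (d : ℝ) : Continuous fun x ↦ x * log (x / d) := by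
  simp_rw [mul_log_div_eq_mul_mul_log _ d]
  exact (continuous_mul_log.comp (continuous_id.div_const d)).const_mul d

theorem mul_log_div_of_ne_zero (x : ℝ) {d : ℝ} (hd : d ≠ 0) :
    x * log (x / d) = x * log x - x * log d := by
  rcases eq_or_ne x 0 with rfl | hx
  · simp
  · rw [log_div hx hd, mul_sub]

theorem continuous_KLossR_left (d : ℝ) : Continuous fun θ ↦ KLossR θ d :=
  (continuous_mul_log_div d).add
    ((continuous_mul_log_div (1 - d)).comp (continuous_const.sub continuous_id))

theorem continuous_riskR (δ : ℝ × ℝ) : Continuous (riskR δ) :=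
  ((continuous_const.sub continuous_id).mul (continuous_KLossR_left δ.1)).add
    (continuous_id.mul (continuous_KLossR_left δ.2))

theorem KLossR_one_sub (θ d : ℝ) : KLossR (1 - θ) d = KLossR θ (1 - d) := by
  simp only [KLossR, sub_sub_cancel]
  ring

theorem riskR_one_sub (δ₀ δ₁ θ : ℝ) : riskR (δ₀, δ₁) (1 - θ) = riskR (1 - δ₁, 1 - δ₀) θ := by
  simp only [riskR, KLossR_one_sub, sub_sub_cancel]
  ring

theorem KLossR_eq_sub {d : ℝ} (θ : ℝ) (hd₀ : d ≠ 0) (hd₁ : 1 - d ≠ 0) :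
    KLossR θ d = θ * log θ + (1 - θ) * log (1 - θ) - (θ * log d + (1 - θ) * log (1 - d)) := by
  rw [KLossR, mul_log_div_of_ne_zero θ hd₀, mul_log_div_of_ne_zero (1 - θ) hd₁]
  ring

theorem KLossR_midpoint_lt {θ a b : ℝ} (hθ : θ ∈ Icc 0 1) (ha : a ∈ Ioo 0 1) (hb : b ∈ Ioo 0 1)
    (hab : a ≠ b) : KLossR θ ((a + b) / 2) < (KLossR θ a + KLossR θ b) / 2 := by
  obtain ⟨ha₀, ha₁⟩ := ha
  obtain ⟨hb₀, hb₁⟩ := hb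
  have hlog := log_add_log_lt_two_mul_log_midpoint ha₀ hb₀ hab
  have hlog_one_sub := log_add_log_lt_two_mul_log_midpoint (sub_pos.2 ha₁) (sub_pos.2 hb₁)
    (fun h ↦ hab (sub_right_injective h))
  have hpos := convex_Ioi (0 : ℝ) (sub_pos.2 hlog) (sub_pos.2 hlog_one_sub) hθ.1 (sub_nonneg.2 hθ.2)
    (add_sub_cancel θ 1)
  simp only [smul_eq_mul, mem_Ioi] at hpos
  rw [KLossR_eq_sub θ (by linarith) (by linarith), KLossR_eq_sub θ ha₀.ne' (by linarith),
    KLossR_eq_sub θ hb₀.ne' (by linarith), show 1 - (a + b) / 2 = (1 - a + (1 - b)) / 2 by ring]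
  linear_combination hpos / 2

theorem riskR_midpoint_lt {θ a₀ a₁ b₀ b₁ : ℝ} (hθ : θ ∈ Icc 0 1)
    (ha₀ : a₀ ∈ Ioo 0 1) (ha₁ : a₁ ∈ Ioo 0 1) (hb₀ : b₀ ∈ Ioo 0 1) (hb₁ : b₁ ∈ Ioo 0 1)
    (h₀ : a₀ ≠ b₀) (h₁ : a₁ ≠ b₁) :
    riskR ((a₀ + b₀) / 2, (a₁ + b₁) / 2) θ < (riskR (a₀, a₁) θ + riskR (b₀, b₁) θ) / 2 := by
  have hK₀ := sub_pos.2 (KLossR_midpoint_lt hθ ha₀ hb₀ h₀)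
  have hK₁ := sub_pos.2 (KLossR_midpoint_lt hθ ha₁ hb₁ h₁)
  have hpos := convex_Ioi (0 : ℝ) hK₀ hK₁ (sub_nonneg.2 hθ.2) hθ.1 (sub_add_cancel 1 θ)
  simp only [smul_eq_mul, mem_Ioi] at hpos
  simp only [riskR]
  linear_combination hpos

/-- Symmetrization strictly lowers the worst-case risk: for `(δ₀,δ₁) ∈ (0,1)²` with
`δ₀ + δ₁ ≠ 1`, the symmetrized decision `δ_s = ((δ₀+1−δ₁)/2, (δ₁+1−δ₀)/2)` satisfies
`sup_{θ∈[0,1]} R_{δ_s}(θ) < sup_{θ∈[0,1]} R_{(δ₀,δ₁)}(θ)`. -/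
theorem symmetrization_lowers_worst_case (δ₀ δ₁ : ℝ)
    (h0 : δ₀ ∈ Set.Ioo (0 : ℝ) 1) (h1 : δ₁ ∈ Set.Ioo (0 : ℝ) 1)
    (hne : δ₀ + δ₁ ≠ 1) :
    sSup (riskR ((δ₀ + 1 - δ₁) / 2, (δ₁ + 1 - δ₀) / 2) '' Set.Icc (0 : ℝ) 1) <
      sSup (riskR (δ₀, δ₁) '' Set.Icc (0 : ℝ) 1) := by
  have h0' : 1 - δ₀ ∈ Ioo (0 : ℝ) 1 := ⟨sub_pos.2 h0.2, sub_lt_self 1 h0.1⟩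
  have h1' : 1 - δ₁ ∈ Ioo (0 : ℝ) 1 := ⟨sub_pos.2 h1.2, sub_lt_self 1 h1.1⟩
  refine isCompact_Icc.sSup_image_lt_of_forall_exists_lt (nonempty_Icc.2 zero_le_one)
    (continuous_riskR _).continuousOn
    (isCompact_Icc.bddAbove_image (continuous_riskR _).continuousOn) fun θ hθ ↦ ?_
  have hmid := riskR_midpoint_lt hθ h0 h1 h1' h0' (by grind) (by grind)
  rw [← add_sub_assoc, ← add_sub_assoc, ← riskR_one_sub] at hmid
  rcases le_total (riskR (δ₀, δ₁) (1 - θ)) (riskR (δ₀, δ₁) θ) with hle | hle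
  · exact ⟨θ, hθ, by linarith⟩
  · exact ⟨1 - θ, ⟨sub_nonneg.2 hθ.2, sub_le_self 1 hθ.1⟩, by linarith⟩
end

section
/- Let a ≥ 1/3 and set δ₀ = a/(2a+1), δ₁ = (a+1)/(2a+1). Then sup_{θ ∈ [0,1]} R_{(δ₀,δ₁)}(θ) = log((2a+1)/(a+1)). -/
/-!
Put `d = a/(2a+1)`, so that the decision is `(d, 1 - d)`. Expanding the logarithms gives
`R(θ) = -log(1-d) - H(θ) + 2θ(1-θ)·log((1-d)/d)` with `H` the binary entropy. Hence
`R(0) = -log(1-d) = log((2a+1)/(a+1))`, and this is the maximum as soon as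
`2θ(1-θ)·log((1-d)/d) ≤ H(θ)`. For `a ≥ 1/3` we have `(1-d)/d = (a+1)/a ≤ 4`, so it suffices that
`4 log 2 · θ(1-θ) ≤ H(θ)`. In the variable `x = 1 - 2θ`, twice the gap in this inequality is the
even function `entropyGap`, which vanishes at `0` and `1`; its second derivative
`4 log 2 - 2/(1-x²)` changes sign once on `[0, 1)`, so it increases up to the inflection point
and is concave after it, and is therefore nonnegative on `[0, 1]`.
-/

open Real Set

theorem nonneg_of_monotoneOn_of_concaveOn {f : ℝ → ℝ} {a s b : ℝ} (has : a ≤ s) (hsb : s ≤ b)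
    (ha : 0 ≤ f a) (hb : 0 ≤ f b) (hmono : MonotoneOn f (Icc a s))
    (hconc : ConcaveOn ℝ (Icc s b) f) {x : ℝ} (hx : x ∈ Icc a b) : 0 ≤ f x := by
  rcases le_total x s with hxs | hsx
  · exact ha.trans (hmono ⟨le_rfl, has⟩ ⟨hx.1, hxs⟩ hx.1)
  · have hs : 0 ≤ f s := ha.trans (hmono ⟨le_rfl, has⟩ ⟨has, le_rfl⟩ has)
    have hseg : x ∈ segment ℝ s b := (segment_eq_Icc hsb).symm ▸ ⟨hsx, hx.2⟩
    exact (le_min hs hb).trans (hconc.ge_on_segment ⟨le_rfl, hsb⟩ ⟨hsb, le_rfl⟩ hseg)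

theorem one_lt_two_mul_log_two : 1 < 2 * log 2 := by
  linarith [log_two_gt_d9]

noncomputable def entropyGap (x : ℝ) : ℝ :=
  2 * log 2 * x ^ 2 + negMulLog (1 + x) + negMulLog (1 - x)

noncomputable def entropyGapDeriv (x : ℝ) : ℝ :=
  4 * log 2 * x - log (1 + x) + log (1 - x)

noncomputable def entropyGapDeriv2 (x : ℝ) : ℝ :=
  4 * log 2 - 2 / (1 - x ^ 2)

noncomputable def entropyGapInflection : ℝ :=
  √(1 - (2 * log 2)⁻¹)

theorem continuous_entropyGap : Continuous entropyGap := by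
  unfold entropyGap
  fun_prop

theorem entropyGap_neg (x : ℝ) : entropyGap (-x) = entropyGap x := by
  simp only [entropyGap, sub_neg_eq_add, ← sub_eq_add_neg]
  ring

theorem entropyGap_one_sub_two_mul (p : ℝ) :
    entropyGap (1 - 2 * p) = 2 * (binEntropy p - 4 * log 2 * (p * (1 - p))) := by
  have h₁ : 1 + (1 - 2 * p) = 2 * (1 - p) := by ring
  have h₂ : 1 - (1 - 2 * p) = 2 * p := by ring
  rw [entropyGap, h₁, h₂, negMulLog_mul, negMulLog_mul,
    binEntropy_eq_negMulLog_add_negMulLog_one_sub, negMulLog]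
  ring

theorem hasDerivAt_entropyGap {x : ℝ} (h₁ : -1 < x) (h₂ : x < 1) :
    HasDerivAt entropyGap (entropyGapDeriv x) x := by
  have hp := (hasDerivAt_negMulLog (by linarith : 1 + x ≠ 0)).comp x
    ((hasDerivAt_id x).const_add 1)
  have hm := (hasDerivAt_negMulLog (by linarith : 1 - x ≠ 0)).comp x
    ((hasDerivAt_id x).const_sub 1)
  have hq := (hasDerivAt_pow 2 x).const_mul (2 * log 2)
  refine ((hq.add hp).add hm).congr_deriv ?_
  rw [entropyGapDeriv]
  ring

theorem hasDerivAt_entropyGapDeriv {x : ℝ} (h₁ : -1 < x) (h₂ : x < 1) :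
    HasDerivAt entropyGapDeriv (entropyGapDeriv2 x) x := by
  have hp := (hasDerivAt_log (by linarith : 1 + x ≠ 0)).comp x ((hasDerivAt_id x).const_add 1)
  have hm := (hasDerivAt_log (by linarith : 1 - x ≠ 0)).comp x ((hasDerivAt_id x).const_sub 1)
  have hl := (hasDerivAt_id x).const_mul (4 * log 2)
  refine ((hl.sub hp).add hm).congr_deriv ?_
  have hpos : 1 + x ≠ 0 := by linarith
  have hneg : 1 - x ≠ 0 := by linarith
  rw [entropyGapDeriv2, show (1 : ℝ) - x ^ 2 = (1 + x) * (1 - x) by ring]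
  field_simp
  ring

theorem entropyGapInflection_pos : 0 < entropyGapInflection :=
  sqrt_pos.2 (sub_pos.2 (inv_lt_one_of_one_lt₀ one_lt_two_mul_log_two))

theorem entropyGapInflection_lt_one : entropyGapInflection < 1 := by
  have : 0 < (2 * log 2)⁻¹ := inv_pos.2 (by linarith [one_lt_two_mul_log_two])
  rw [entropyGapInflection, sqrt_lt' one_pos]
  linarith

theorem entropyGapDeriv2_nonneg_iff {x : ℝ} (hx₀ : 0 ≤ x) (hx₁ : x < 1) :
    0 ≤ entropyGapDeriv2 x ↔ x ≤ entropyGapInflection := by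
  have hL := one_lt_two_mul_log_two
  have hx : 0 < 1 - x ^ 2 := by nlinarith
  rw [entropyGapDeriv2, sub_nonneg, div_le_iff₀ hx, entropyGapInflection,
    le_sqrt hx₀ (sub_nonneg.2 (inv_le_one_of_one_le₀ hL.le)), le_sub_comm,
    inv_le_iff_one_le_mul₀ (by linarith)]
  constructor <;> intro h <;> linarith

theorem entropyGapDeriv_nonneg {x : ℝ} (hx : x ∈ Icc 0 entropyGapInflection) :
    0 ≤ entropyGapDeriv x := by
  have hs := entropyGapInflection_lt_one
  have hmono : MonotoneOn entropyGapDeriv (Icc 0 entropyGapInflection) := by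
    refine monotoneOn_of_hasDerivWithinAt_nonneg (convex_Icc _ _) (f' := entropyGapDeriv2)
      (fun y hy ↦ (hasDerivAt_entropyGapDeriv (by linarith [hy.1])
        (by linarith [hy.2])).continuousAt.continuousWithinAt) (fun y hy ↦ ?_) (fun y hy ↦ ?_)
    all_goals rw [interior_Icc] at hy
    · exact (hasDerivAt_entropyGapDeriv (by linarith [hy.1])
        (by linarith [hy.2])).hasDerivWithinAt
    · exact (entropyGapDeriv2_nonneg_iff hy.1.le (by linarith [hy.2])).2 hy.2.le
  simpa [entropyGapDeriv] using hmono ⟨le_rfl, entropyGapInflection_pos.le⟩ hx hx.1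

theorem monotoneOn_entropyGap : MonotoneOn entropyGap (Icc 0 entropyGapInflection) := by
  have hs := entropyGapInflection_lt_one
  refine monotoneOn_of_hasDerivWithinAt_nonneg (convex_Icc _ _) (f' := entropyGapDeriv)
    (fun y hy ↦ (hasDerivAt_entropyGap (by linarith [hy.1])
      (by linarith [hy.2])).continuousAt.continuousWithinAt) (fun y hy ↦ ?_) (fun y hy ↦ ?_)
  all_goals rw [interior_Icc] at hy
  · exact (hasDerivAt_entropyGap (by linarith [hy.1]) (by linarith [hy.2])).hasDerivWithinAt
  · exact entropyGapDeriv_nonneg ⟨hy.1.le, hy.2.le⟩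

theorem concaveOn_entropyGap : ConcaveOn ℝ (Icc entropyGapInflection 1) entropyGap := by
  have hs := entropyGapInflection_pos
  refine concaveOn_of_hasDerivWithinAt2_nonpos (convex_Icc _ _) continuous_entropyGap.continuousOn
    (f' := entropyGapDeriv) (f'' := entropyGapDeriv2) (fun y hy ↦ ?_) (fun y hy ↦ ?_)
    (fun y hy ↦ ?_)
  all_goals rw [interior_Icc] at hy
  · exact (hasDerivAt_entropyGap (by linarith [hy.1]) hy.2).hasDerivWithinAt
  · exact (hasDerivAt_entropyGapDeriv (by linarith [hy.1]) hy.2).hasDerivWithinAt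
  · have := mt (entropyGapDeriv2_nonneg_iff (by linarith [hy.1]) hy.2).1 (not_le.2 hy.1)
    linarith

theorem entropyGap_nonneg {x : ℝ} (hx : x ∈ Icc (-1) 1) : 0 ≤ entropyGap x := by
  have hs₀ := entropyGapInflection_pos
  have hs₁ := entropyGapInflection_lt_one
  have hpos : ∀ y ∈ Icc (0 : ℝ) 1, 0 ≤ entropyGap y :=
    fun y hy ↦ nonneg_of_monotoneOn_of_concaveOn hs₀.le hs₁.le (by simp [entropyGap])
      (by norm_num [entropyGap, negMulLog]) monotoneOn_entropyGap concaveOn_entropyGap hy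
  rcases le_total 0 x with h | h
  · exact hpos x ⟨h, hx.2⟩
  · simpa [entropyGap_neg] using hpos (-x) ⟨by linarith, by linarith [hx.1]⟩

theorem four_mul_log_two_mul_le_binEntropy {p : ℝ} (hp₀ : 0 ≤ p) (hp₁ : p ≤ 1) :
    4 * log 2 * (p * (1 - p)) ≤ binEntropy p := by
  have := entropyGap_nonneg (x := 1 - 2 * p) ⟨by linarith, by linarith⟩
  rw [entropyGap_one_sub_two_mul] at this
  linarith

theorem mul_log_div_eq {t d : ℝ} (hd : d ≠ 0) : t * log (t / d) = -negMulLog t - t * log d := by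
  rcases eq_or_ne t 0 with rfl | ht
  · simp
  · rw [log_div ht hd, negMulLog]
    ring

theorem KLossR_eq {θ d : ℝ} (hd₀ : d ≠ 0) (hd₁ : d ≠ 1) :
    KLossR θ d = -binEntropy θ - θ * log d - (1 - θ) * log (1 - d) := by
  rw [KLossR, mul_log_div_eq hd₀, mul_log_div_eq (sub_ne_zero.2 hd₁.symm),
    binEntropy_eq_negMulLog_add_negMulLog_one_sub]
  ring

theorem riskR_symm {θ d : ℝ} (hd₀ : d ≠ 0) (hd₁ : d ≠ 1) :
    riskR (d, 1 - d) θ =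
      -log (1 - d) - binEntropy θ + 2 * (θ * (1 - θ)) * log ((1 - d) / d) := by
  have hd₁' : 1 - d ≠ 1 := by simpa using hd₀
  rw [riskR, KLossR_eq hd₀ hd₁, KLossR_eq (sub_ne_zero.2 hd₁.symm) hd₁',
    sub_sub_cancel, log_div (sub_ne_zero.2 hd₁.symm) hd₀]
  ring

theorem sSup_riskR_symm {d : ℝ} (hd : 1 / 5 ≤ d) (hd₁ : d < 1) :
    sSup (riskR (d, 1 - d) '' Icc 0 1) = -log (1 - d) := by
  have hd₀ : d ≠ 0 := by linarith
  refine IsGreatest.csSup_eq ⟨⟨0, ⟨le_rfl, zero_le_one⟩, by simp [riskR_symm hd₀ hd₁.ne]⟩, ?_⟩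
  rintro _ ⟨θ, hθ, rfl⟩
  have hratio : log ((1 - d) / d) ≤ 2 * log 2 :=
    calc log ((1 - d) / d) ≤ log 4 :=
          log_le_log (div_pos (by linarith) (by linarith))
            (by rw [div_le_iff₀ (by linarith)]; linarith)
      _ = 2 * log 2 := by rw [show (4 : ℝ) = 2 ^ 2 by norm_num, log_pow]; norm_num
  have hvar : 0 ≤ θ * (1 - θ) := mul_nonneg hθ.1 (by linarith [hθ.2])
  have hH := four_mul_log_two_mul_le_binEntropy hθ.1 hθ.2
  rw [riskR_symm hd₀ hd₁.ne]
  linarith [mul_le_mul_of_nonneg_left hratio hvar]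

/-- For `a ≥ 1/3`, the worst-case risk of the Beta(a,a)-Bayes decision
`(a/(2a+1), (a+1)/(2a+1))` equals `log((2a+1)/(a+1))`. -/
theorem worst_case_risk_large_a (a : ℝ) (ha : 1 / 3 ≤ a) :
    sSup (riskR (a / (2 * a + 1), (a + 1) / (2 * a + 1)) '' Set.Icc (0 : ℝ) 1) =
      Real.log ((2 * a + 1) / (a + 1)) := by
  have hc : 0 < 2 * a + 1 := by linarith
  have hδ : (a + 1) / (2 * a + 1) = 1 - a / (2 * a + 1) := by field_simp; ring
  rw [hδ, sSup_riskR_symm (by rw [le_div_iff₀ hc]; linarith) (by rw [div_lt_one hc]; linarith),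
    ← hδ, ← log_inv, inv_div]
end

section
/- Let 0 < a ≤ 1/3 and set δ₀ = a/(2a+1), δ₁ = (a+1)/(2a+1). Then sup_{θ ∈ [0,1]} R_{(δ₀,δ₁)}(θ) = (1/2)·log((a+1)/(4a)) + log((2a+1)/(a+1)). -/
open Real Set

namespace Real

theorem mul_log_div (x : ℝ) {y : ℝ} (hy : y ≠ 0) : x * log (x / y) = x * log x - x * log y := by
  rcases eq_or_ne x 0 with rfl | hx
  · simp
  · rw [log_div hx hy, mul_sub]

theorem log_le_half_sub_inv {x : ℝ} (hx : 1 ≤ x) : log x ≤ (x - x⁻¹) / 2 := by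
  simpa [sinh_log (by linarith)] using self_le_sinh_iff.2 (log_nonneg hx)

theorem log_sub_log_one_sub_le {p : ℝ} (h : 1 / 2 ≤ p) (h1 : p < 1) :
    log p - log (1 - p) ≤ (2 * p - 1) / (2 * p * (1 - p)) := by
  have hp : 0 < p := by linarith
  have hq : 0 < 1 - p := by linarith
  calc log p - log (1 - p) = log (p / (1 - p)) := (log_div hp.ne' hq.ne').symm
    _ ≤ (p / (1 - p) - (p / (1 - p))⁻¹) / 2 :=
      log_le_half_sub_inv ((one_le_div hq).2 (by linarith))
    _ = (2 * p - 1) / (2 * p * (1 - p)) := by field_simp; ring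

theorem four_mul_log_two_sub_binEntropy_le {p : ℝ} (h : 1 / 2 ≤ p) (h1 : p < 1) :
    4 * (log 2 - binEntropy p) ≤ (2 * p - 1) * (log p - log (1 - p)) := by
  set k := fun x ↦ (2 * x - 1) * (log x - log (1 - x)) - 4 * (log 2 - binEntropy x)
  have hk : ∀ x ∈ Ico (1 / 2 : ℝ) 1,
      HasDerivAt k ((2 * x - 1) / (x * (1 - x)) - 2 * (log x - log (1 - x))) x := by
    rintro x ⟨hx, hx1⟩
    have hx0 : 0 < x := by linarith
    have hx1' : 0 < 1 - x := by linarith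
    have := ((((hasDerivAt_id x).const_mul 2).sub_const 1).mul
      ((hasDerivAt_id x).log hx0.ne' |>.sub (((hasDerivAt_id x).const_sub 1).log hx1'.ne'))).sub
      ((hasDerivAt_binEntropy hx0.ne' (by linarith)).const_sub (log 2) |>.const_mul 4)
    refine this.congr_deriv ?_
    simp only [Pi.sub_apply, id_eq]
    field_simp
    ring
  have hmono : MonotoneOn k (Ico (1 / 2) 1) := by
    refine monotoneOn_of_hasDerivWithinAt_nonneg (convex_Ico _ _)
      (fun x hx ↦ (hk x hx).continuousAt.continuousWithinAt)
      (fun x hx ↦ (hk x (interior_subset hx)).hasDerivWithinAt) fun x hx ↦ ?_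
    rw [interior_Ico] at hx
    have := log_sub_log_one_sub_le hx.1.le hx.2
    have e : (2 * x - 1) / (x * (1 - x)) = 2 * ((2 * x - 1) / (2 * x * (1 - x))) := by
      field_simp
    linarith
  have := hmono (left_mem_Ico.2 (by norm_num)) ⟨h, h1⟩ h
  simp only [k] at this
  rw [one_div, binEntropy_two_inv] at this
  linarith

theorem log_two_sub_binEntropy_le {p : ℝ} (h : 1 / 2 ≤ p) (h1 : p ≤ 1) :
    log 2 - binEntropy p ≤ log 2 * (2 * p - 1) ^ 2 := by
  rcases h.eq_or_lt with rfl | hlt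
  · rw [one_div, binEntropy_two_inv]
    norm_num
  set g := fun x ↦ (log 2 - binEntropy x) / (2 * x - 1) ^ 2
  have hmono : MonotoneOn g (Ioc (1 / 2) 1) := by
    refine monotoneOn_of_hasDerivWithinAt_nonneg (convex_Ioc _ _)
      (f' := fun x ↦ ((2 * x - 1) * (log x - log (1 - x)) - 4 * (log 2 - binEntropy x)) /
        (2 * x - 1) ^ 3) ?_ (fun x hx ↦ ?_) fun x hx ↦ ?_
    · refine (continuous_const.sub binEntropy_continuous).continuousOn.div (by fun_prop) ?_
      exact fun x hx ↦ pow_ne_zero 2 (by linarith [hx.1])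
    · rw [interior_Ioc] at hx
      have hx0 : 2 * x - 1 ≠ 0 := by linarith [hx.1]
      refine HasDerivAt.hasDerivWithinAt ?_
      have := ((hasDerivAt_binEntropy (by linarith [hx.1]) hx.2.ne).const_sub (log 2)).div
        ((((hasDerivAt_id x).const_mul 2).sub_const 1).pow 2) (pow_ne_zero 2 hx0)
      refine this.congr_deriv ?_
      simp only [Pi.pow_apply, id_eq, Nat.cast_ofNat, Nat.add_one_sub_one, pow_one]
      field_simp
      ring
    · rw [interior_Ioc] at hx
      have hx0 : 0 < 2 * x - 1 := by linarith [hx.1]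
      exact div_nonneg (sub_nonneg.2 (four_mul_log_two_sub_binEntropy_le hx.1.le hx.2))
        (by positivity)
  have := hmono ⟨hlt, h1⟩ (right_mem_Ioc.2 (by norm_num)) h1
  have hp : 0 < (2 * p - 1) ^ 2 := by nlinarith
  simp only [g, binEntropy_one] at this
  norm_num at this
  rwa [div_le_iff₀ hp] at this

theorem log_two_mul_four_mul_le_binEntropy {p : ℝ} (h0 : 0 ≤ p) (h1 : p ≤ 1) :
    log 2 * (4 * p * (1 - p)) ≤ binEntropy p := by
  rcases le_total (1 / 2) p with h | h
  · linarith [log_two_sub_binEntropy_le h h1]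
  · have := log_two_sub_binEntropy_le (p := 1 - p) (by linarith) (by linarith)
    rw [binEntropy_one_sub] at this
    linarith

end Real

theorem KLossR_eq_neg_binEntropy_sub {d : ℝ} (hd0 : d ≠ 0) (hd1 : 1 - d ≠ 0) (θ : ℝ) :
    KLossR θ d = -binEntropy θ - θ * log d - (1 - θ) * log (1 - d) := by
  rw [KLossR, mul_log_div θ hd0, mul_log_div (1 - θ) hd1, binEntropy, log_inv, log_inv]
  ring

theorem riskR_one_sub_s13 {p : ℝ} (hp0 : 0 < p) (hp1 : p < 1) (θ : ℝ) :
    riskR (p, 1 - p) θ =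
      -binEntropy θ - (log p + log (1 - p)) / 2 - (1 - 2 * θ) ^ 2 / 2 * (log (1 - p) - log p) := by
  have hp : p ≠ 0 := hp0.ne'
  have hq : 1 - p ≠ 0 := by linarith
  rw [riskR, KLossR_eq_neg_binEntropy_sub hp hq,
    KLossR_eq_neg_binEntropy_sub hq (by simpa using hp), sub_sub_cancel]
  ring

theorem isGreatest_riskR_one_sub {p : ℝ} (hp0 : 0 < p) (hp : 5 * p ≤ 1) :
    IsGreatest (riskR (p, 1 - p) '' Icc 0 1) (-log 2 - (log p + log (1 - p)) / 2) := by
  have hp1 : p < 1 := by linarith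
  refine ⟨⟨1 / 2, ⟨by norm_num, by norm_num⟩, ?_⟩, forall_mem_image.2 fun θ hθ ↦ ?_⟩
  · rw [riskR_one_sub_s13 hp0 hp1, one_div, binEntropy_two_inv]
    ring
  · have hH := log_two_mul_four_mul_le_binEntropy hθ.1 hθ.2
    have hlog4 : 2 * log 2 ≤ log (1 - p) - log p :=
      calc 2 * log 2 = log 4 := by rw [show (4 : ℝ) = 2 ^ 2 by norm_num, log_pow]; norm_num
        _ ≤ log ((1 - p) / p) := log_le_log (by norm_num) ((le_div_iff₀ hp0).2 (by linarith))
        _ = log (1 - p) - log p := log_div (by linarith) hp0.ne'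
    have hsq := mul_le_mul_of_nonneg_left hlog4 (sq_nonneg (1 - 2 * θ))
    rw [riskR_one_sub_s13 hp0 hp1]
    linarith

/-- For `0 < a ≤ 1/3`, the worst-case risk of the Beta(a,a)-Bayes decision
`(a/(2a+1), (a+1)/(2a+1))` equals `(1/2)·log((a+1)/(4a)) + log((2a+1)/(a+1))`. -/
theorem worst_case_risk_small_a (a : ℝ) (ha0 : 0 < a) (ha : a ≤ 1 / 3) :
    sSup (riskR (a / (2 * a + 1), (a + 1) / (2 * a + 1)) '' Set.Icc (0 : ℝ) 1) =
      1 / 2 * Real.log ((a + 1) / (4 * a)) + Real.log ((2 * a + 1) / (a + 1)) := by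
  have h2a : 0 < 2 * a + 1 := by linarith
  have hq : (a + 1) / (2 * a + 1) = 1 - a / (2 * a + 1) := by field_simp; ring
  have hp5 : 5 * (a / (2 * a + 1)) ≤ 1 := by
    rw [← mul_div_assoc, div_le_one h2a]; linarith
  rw [hq, (isGreatest_riskR_one_sub (div_pos ha0 h2a) hp5).csSup_eq, ← hq,
    log_div ha0.ne' h2a.ne', log_div (by linarith) h2a.ne', log_div (by linarith) (by linarith),
    log_div h2a.ne' (by linarith), log_mul (by norm_num) ha0.ne',
    show (4 : ℝ) = 2 ^ 2 by norm_num, log_pow]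
  push_cast
  ring
end
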